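/- arXiv:2109.01473 — 2 statements merged into one kernel-verified Lean document; each statement's English description precedes it below -/
import Mathlib

section
/- In the group algebra Q[S_{n+1}], the element x_{n-1} (sum of all w with w(1) < ... < w(n)) satisfies the polynomial identity x_{n-1}^(falling (n+1)) = x_{n-1}^(falling n), i.e., prod_{i=0}^{n} (x_{n-1} - i) = prod_{i=0}^{n-1} (x_{n-1} - i). -/
/-- In the group algebra `ℚ[S_N]` (permutations of `{0, 1, ..., N-1}`, corresponding to
`{1, ..., N}` in one-based indexing), `xA N j` is the sum of all permutations `w` with
`w 0 < w 1 < ... < w j`, i.e. the minimal-length left coset representatives of the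
parabolic subgroup generated by the adjacent transpositions `s_1, ..., s_j`. -/
noncomputable def xA (N j : ℕ) : MonoidAlgebra ℚ (Equiv.Perm (Fin N)) :=
  ∑ w ∈ Finset.univ.filter
      (fun w : Equiv.Perm (Fin N) => ∀ a b : Fin N, a < b → (b : ℕ) ≤ j → w a < w b),
    MonoidAlgebra.single w 1

/-!
Write `x_j` for `xA (n + 1) j`. The permutations increasing on `0, …, n - 1` are the
`succAbovePerm k`, and left multiplication by the inverse of `succAbovePerm k` keeps the relative
order of all values except `k`, which becomes the largest. Counting, for each `w`, the
factorisations `w = v u` with `v` in `x_{n-1}` and `u` in `x_j` therefore gives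
`x_{n-1} x_j = x_{j-1} + (n - j) x_j` for `j ≤ n`, where `x_{0-1} = x_0` by truncated subtraction.
Since `x_n = 1`, induction gives `∏_{i<m} (x_{n-1} - i) = x_{n-m}` for all `m ≤ n + 1`, so both
sides of the theorem equal `x_0`.
-/

open Finset MonoidAlgebra Equiv

theorem MonoidAlgebra.sum_single_one_mul_sum_single_one {R G : Type*} [Semiring R] [Group G]
    [Fintype G] [DecidableEq G] (S T : Finset G) :
    (∑ s ∈ S, single s (1 : R)) * ∑ t ∈ T, single t (1 : R) =
      ∑ g, single g (#{s ∈ S | s⁻¹ * g ∈ T} : R) := by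
  calc _ = ∑ s ∈ S, ∑ g, if s⁻¹ * g ∈ T then single g (1 : R) else 0 := by
        rw [sum_mul_sum]
        refine sum_congr rfl fun s _ => ?_
        rw [← sum_filter]
        refine sum_nbij' (s * ·) (s⁻¹ * ·) ?_ ?_ ?_ ?_ ?_ <;> simp [single_mul_single]
    _ = _ := by
        rw [sum_comm]
        refine sum_congr rfl fun g _ => ?_
        rw [← sum_filter, sum_const, smul_single, nsmul_one]

theorem MonoidAlgebra.sum_filter_single_one {R G : Type*} [Semiring R] [Fintype G]
    (P : G → Prop) [DecidablePred P] :
    ∑ g ∈ univ.filter P, single g (1 : R) = ∑ g, single g (if P g then 1 else 0) := by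
  rw [sum_filter]
  exact sum_congr rfl fun g _ => by split_ifs <;> simp

lemma Commute.sub_natCast_list_prod {R : Type*} [Ring R] (x : R) (m : ℕ) (l : List ℕ) :
    Commute (x - m) (l.map fun i : ℕ => x - (i : R)).prod :=
  Commute.list_prod_right _ _ fun y hy => by
    obtain ⟨i, -, rfl⟩ := List.mem_map.1 hy
    exact ((Commute.refl x).sub_right (Nat.commute_cast x i)).sub_left
      ((Nat.cast_commute m x).sub_right (Nat.commute_cast (m : R) i))

lemma Fin.card_filter_lt_and_or_eq_and {n j : ℕ} (hj : j ≤ n) {P Q : Prop} [Decidable P]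
    [Decidable Q] (hPQ : P → Q) :
    #{p : Fin (n + 1) | (j < (p : ℕ) ∧ P) ∨ ((p : ℕ) = j ∧ Q)} =
      (if Q then 1 else 0) + (n - j) * (if P then 1 else 0) := by
  by_cases hP : P
  · have : ({p | (j < (p : ℕ) ∧ P) ∨ ((p : ℕ) = j ∧ Q)} : Finset (Fin (n + 1))) =
        Ici ⟨j, by omega⟩ := by
      ext p
      simp only [hP, hPQ hP, and_true, mem_filter, mem_univ, true_and, mem_Ici, Fin.le_def]
      omega
    rw [this, Fin.card_Ici, Fin.val_mk, if_pos hP, if_pos (hPQ hP)]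
    omega
  · have : ({p | (j < (p : ℕ) ∧ P) ∨ ((p : ℕ) = j ∧ Q)} : Finset (Fin (n + 1))) =
        if Q then {⟨j, by omega⟩} else ∅ := by
      ext p
      split_ifs <;> simp [*, Fin.ext_iff]
    rw [this]
    split_ifs <;> simp

variable {n : ℕ}

/-- The permutation with one-line form `(0, …, k - 1, k + 1, …, n, k)`. -/
def succAbovePerm (k : Fin (n + 1)) : Perm (Fin (n + 1)) :=
  (finSuccEquiv' (Fin.last n)).trans (finSuccEquiv' k).symm

@[simp] lemma succAbovePerm_last (k : Fin (n + 1)) : succAbovePerm k (Fin.last n) = k := by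
  simp [succAbovePerm]

@[simp] lemma succAbovePerm_castSucc (k : Fin (n + 1)) (i : Fin n) :
    succAbovePerm k i.castSucc = k.succAbove i := by
  simp [succAbovePerm, finSuccEquiv'_last_apply_castSucc]

lemma succAbovePerm_inv_self (k : Fin (n + 1)) : (succAbovePerm k)⁻¹ k = Fin.last n := by
  rw [Perm.inv_eq_iff_eq, succAbovePerm_last]

lemma succAbovePerm_inv_succAbove (k : Fin (n + 1)) (i : Fin n) :
    (succAbovePerm k)⁻¹ (k.succAbove i) = i.castSucc := by
  rw [Perm.inv_eq_iff_eq, succAbovePerm_castSucc]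

lemma succAbovePerm_inv_lt_iff {k y z : Fin (n + 1)} (hy : y ≠ k) (hz : z ≠ k) :
    (succAbovePerm k)⁻¹ y < (succAbovePerm k)⁻¹ z ↔ y < z := by
  obtain ⟨i, rfl⟩ := Fin.exists_succAbove_eq hy
  obtain ⟨i', rfl⟩ := Fin.exists_succAbove_eq hz
  simp [succAbovePerm_inv_succAbove]

lemma succAbovePerm_inv_lt_last {k y : Fin (n + 1)} (hy : y ≠ k) :
    (succAbovePerm k)⁻¹ y < Fin.last n := by
  obtain ⟨i, rfl⟩ := Fin.exists_succAbove_eq hy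
  simp [succAbovePerm_inv_succAbove]

lemma succAbovePerm_injective : Function.Injective (succAbovePerm (n := n)) := fun k k' h => by
  simpa using congrArg (· (Fin.last n)) h

lemma eq_succAbovePerm_of_strictMono {v : Perm (Fin (n + 1))}
    (hv : StrictMono (v ∘ Fin.castSucc)) : v = succAbovePerm (v (Fin.last n)) := by
  have hrange : Set.range (v ∘ Fin.castSucc) = Set.range (v (Fin.last n)).succAbove := by
    rw [Set.range_comp, ← Fin.succAbove_last, Fin.range_succAbove, Fin.range_succAbove,
      Set.image_compl_eq v.bijective, Set.image_singleton]
  have h := (hv.range_inj (Fin.strictMono_succAbove _)).1 hrange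
  ext i
  induction i using Fin.lastCases with
  | last => simp
  | cast i => simp [← congrFun h i]

def IsIncreasingUpTo {N : ℕ} (j : ℕ) (w : Perm (Fin N)) : Prop :=
  ∀ a b : Fin N, a < b → (b : ℕ) ≤ j → w a < w b

instance {N j : ℕ} : DecidablePred (IsIncreasingUpTo (N := N) j) := fun _ => by
  unfold IsIncreasingUpTo; infer_instance

lemma xA_eq_sum (N j : ℕ) : xA N j = ∑ w ∈ univ.filter (IsIncreasingUpTo j), single w 1 := rfl

lemma IsIncreasingUpTo.mono {N i j : ℕ} {w : Perm (Fin N)} (hw : IsIncreasingUpTo j w)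
    (hij : i ≤ j) : IsIncreasingUpTo i w :=
  fun a b hab hb => hw a b hab (hb.trans hij)

lemma isIncreasingUpTo_self_iff {w : Perm (Fin (n + 1))} : IsIncreasingUpTo n w ↔ w = 1 := by
  refine ⟨fun hw => ?_, ?_⟩
  · have hmono : StrictMono w := fun a b hab => hw a b hab (Nat.lt_succ_iff.1 b.isLt)
    have h := (hmono.range_inj strictMono_id).1 (by simp [Set.range_id])
    exact Perm.ext (congrFun h)
  · rintro rfl a b hab _
    exact hab

lemma isIncreasingUpTo_pred_iff {v : Perm (Fin (n + 1))} :
    IsIncreasingUpTo (n - 1) v ↔ StrictMono (v ∘ Fin.castSucc) := by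
  refine ⟨fun hv a b hab => hv _ _ (Fin.castSucc_lt_castSucc_iff.2 hab)
    (Nat.le_sub_one_of_lt b.isLt),
    fun hv a b hab hb => ?_⟩
  have hlast : ∀ c : Fin (n + 1), c ≤ b → c ≠ Fin.last n := fun c hc =>
    Fin.ne_of_val_ne (by rw [Fin.val_last]; omega)
  obtain ⟨b, rfl⟩ := Fin.exists_castSucc_eq.2 (hlast b le_rfl)
  obtain ⟨a, rfl⟩ := Fin.exists_castSucc_eq.2 (hlast a hab.le)
  exact hv (Fin.castSucc_lt_castSucc_iff.1 hab)

lemma filter_isIncreasingUpTo_pred :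
    univ.filter (IsIncreasingUpTo (n - 1)) = univ.image (succAbovePerm (n := n)) := by
  ext v
  simp only [mem_filter, mem_univ, true_and, mem_image, isIncreasingUpTo_pred_iff]
  refine ⟨fun hv => ⟨_, (eq_succAbovePerm_of_strictMono hv).symm⟩, ?_⟩
  rintro ⟨k, rfl⟩
  convert Fin.strictMono_succAbove k using 1
  ext i
  simp

/-- Relabelling by `(succAbovePerm (w p))⁻¹` keeps the relative order of all values of `w`
except `w p`, which becomes the largest. -/
lemma isIncreasingUpTo_succAbovePerm_inv_mul_iff {j : ℕ} (hj : j ≤ n) (w : Perm (Fin (n + 1)))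
    (p : Fin (n + 1)) :
    IsIncreasingUpTo j ((succAbovePerm (w p))⁻¹ * w) ↔
      (j < p ∧ IsIncreasingUpTo j w) ∨ (p = j ∧ IsIncreasingUpTo (j - 1) w) := by
  set g := (succAbovePerm (w p))⁻¹ * w
  have hgp : g p = Fin.last n := succAbovePerm_inv_self _
  have hne : ∀ {a}, a ≠ p → w a ≠ w p := w.injective.ne
  have hlt : ∀ {a}, a ≠ p → g a < Fin.last n := fun ha => succAbovePerm_inv_lt_last (hne ha)
  have hiff : ∀ {a b}, a ≠ p → b ≠ p → (g a < g b ↔ w a < w b) := fun ha hb =>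
    succAbovePerm_inv_lt_iff (hne ha) (hne hb)
  constructor
  · intro h
    have hjp : j ≤ p := by
      by_contra! hpj
      have := h p ⟨p + 1, by omega⟩ (Fin.lt_def.2 (by simp)) (by simp only; omega)
      rw [hgp] at this
      exact not_lt.2 (Fin.le_last _) this
    rcases hjp.lt_or_eq with hjp | rfl
    · exact Or.inl ⟨hjp, fun a b hab hb => (hiff (Fin.ne_of_val_ne (by omega))
        (Fin.ne_of_val_ne (by omega))).1 (h a b hab hb)⟩
    · exact Or.inr ⟨rfl, fun a b hab hb => (hiff (Fin.ne_of_val_ne (by omega))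
        (Fin.ne_of_val_ne (by omega))).1 (h a b hab (by omega))⟩
  · rintro (⟨hjp, hw⟩ | ⟨rfl, hw⟩) a b hab hb
    · exact (hiff (Fin.ne_of_val_ne (by omega)) (Fin.ne_of_val_ne (by omega))).2 (hw a b hab hb)
    · by_cases hbp : b = p
      · rw [hbp, hgp]
        exact hlt (hbp ▸ hab.ne)
      · exact (hiff (Fin.ne_of_val_ne (by omega)) hbp).2 (hw a b hab (by omega))

lemma card_filter_isIncreasingUpTo_succAbovePerm_inv_mul {j : ℕ} (hj : j ≤ n)
    (w : Perm (Fin (n + 1))) :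
    #{k | IsIncreasingUpTo j ((succAbovePerm k)⁻¹ * w)} =
      (if IsIncreasingUpTo (j - 1) w then 1 else 0) +
        (n - j) * (if IsIncreasingUpTo j w then 1 else 0) := by
  rw [← card_equiv w (t := {k | IsIncreasingUpTo j ((succAbovePerm k)⁻¹ * w)})
    (s := {p | IsIncreasingUpTo j ((succAbovePerm (w p))⁻¹ * w)}) (by simp)]
  simp_rw [isIncreasingUpTo_succAbovePerm_inv_mul_iff hj]
  exact Fin.card_filter_lt_and_or_eq_and hj fun hw => hw.mono (Nat.sub_le j 1)

theorem xA_pred_mul_xA {j : ℕ} (hj : j ≤ n) :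
    xA (n + 1) (n - 1) * xA (n + 1) j = xA (n + 1) (j - 1) + ((n - j : ℕ) : ℚ) • xA (n + 1) j := by
  rw [xA_eq_sum, xA_eq_sum, xA_eq_sum, sum_single_one_mul_sum_single_one,
    filter_isIncreasingUpTo_pred, sum_filter_single_one, sum_filter_single_one, smul_sum,
    ← sum_add_distrib]
  refine sum_congr rfl fun w _ => ?_
  simp only [filter_image, mem_filter, mem_univ, true_and]
  rw [card_image_of_injective _ succAbovePerm_injective,
    card_filter_isIncreasingUpTo_succAbovePerm_inv_mul hj, smul_single, ← single_add]
  split_ifs <;> simp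

lemma xA_succ_self_eq_one : xA (n + 1) n = 1 := by
  rw [xA_eq_sum, show univ.filter (IsIncreasingUpTo n) = {1} by
    ext w; simp [isIncreasingUpTo_self_iff], sum_singleton]
  rfl

theorem prod_range_xA_pred_sub_natCast {m : ℕ} (hm : m ≤ n + 1) :
    ((List.range m).map fun i : ℕ =>
      xA (n + 1) (n - 1) - (i : MonoidAlgebra ℚ (Perm (Fin (n + 1))))).prod =
      xA (n + 1) (n - m) := by
  induction m with
  | zero => simpa using xA_succ_self_eq_one.symm
  | succ m ih =>
    rw [List.range_succ, List.map_append, List.prod_append, List.map_singleton,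
      List.prod_singleton, ← (Commute.sub_natCast_list_prod _ _ _).eq, ih (by omega), sub_mul,
      xA_pred_mul_xA (Nat.sub_le n m), Nat.sub_sub_self (by omega), Nat.cast_smul_eq_nsmul,
      nsmul_eq_mul, add_sub_cancel_right, Nat.sub_sub]

theorem xA_fallingPow_succ_eq_general (n : ℕ) :
    ((List.range (n + 1)).map
      (fun i => xA (n + 1) (n - 1)
        - (i : MonoidAlgebra ℚ (Equiv.Perm (Fin (n + 1)))))).prod =
    ((List.range n).map
      (fun i => xA (n + 1) (n - 1)
        - (i : MonoidAlgebra ℚ (Equiv.Perm (Fin (n + 1)))))).prod := by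
  -- The ascriptions `(i : …)` coerce the list `List.range m` itself, through the list monad.
  simp only [List.pure_def, List.bind_eq_flatMap, ← List.map_eq_flatMap, List.map_map,
    Function.comp_def]
  rw [prod_range_xA_pred_sub_natCast le_rfl, prod_range_xA_pred_sub_natCast (Nat.le_succ n),
    Nat.sub_self, Nat.sub_eq_zero_of_le (Nat.le_succ n)]

/-- In `ℚ[S_{n+1}]`, the element `x_{n-1}` satisfies
`x_{n-1}^(falling (n+1)) = x_{n-1}^(falling n)`, i.e.
`∏_{i=0}^{n} (x_{n-1} - i) = ∏_{i=0}^{n-1} (x_{n-1} - i)`. -/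
theorem xA_fallingPow_succ_eq (n : ℕ) (hn : 1 ≤ n) :
    ((List.range (n + 1)).map
      (fun i => xA (n + 1) (n - 1)
        - (i : MonoidAlgebra ℚ (Equiv.Perm (Fin (n + 1)))))).prod =
    ((List.range n).map
      (fun i => xA (n + 1) (n - 1)
        - (i : MonoidAlgebra ℚ (Equiv.Perm (Fin (n + 1)))))).prod :=
  xA_fallingPow_succ_eq_general n
end

section
/- Let W be the group of signed permutations of {1,...,n} (the hyperoctahedral group B_n), and in Q[W] let x_j, for 0 <= j <= n, be the sum of all signed permutations w with w(i-1) < w(i) for all 1 <= i <= j (where w(0) = 0). Then for 0 <= k < n: x_{n-1} * x_{n-k} = 2k * x_{n-k} + x_{n-k-1}, and x_{n-1} * x_0 = 2n * x_0. -/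
open scoped Classical

/-- The hyperoctahedral group `B n` of signed permutations of `{1, ..., n}`: the element
`Sum.inl i` encodes the positive integer `i+1` and `Sum.inr i` encodes `-(i+1)`, and
`Sum.swap` is negation.  A signed permutation is a permutation `w` of
`{±1, ..., ±n}` satisfying `w(-x) = -w(x)`. -/
def Bgroup (n : ℕ) : Subgroup (Equiv.Perm (Fin n ⊕ Fin n)) where
  carrier := {w | ∀ x, w x.swap = (w x).swap}
  one_mem' := by intro x; rfl
  mul_mem' := by
    intro a b ha hb x
    simp only [Equiv.Perm.mul_apply, hb x, ha (b x)]
  inv_mem' := by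
    intro a ha x
    have h := ha (a⁻¹ x)
    rw [show a (a⁻¹ x) = x from a.apply_symm_apply x] at h
    rw [← h]
    exact a.symm_apply_apply _

/-- The integer value of a signed point: `Sum.inl i ↦ i+1`, `Sum.inr i ↦ -(i+1)`. -/
def bval (n : ℕ) : Fin n ⊕ Fin n → ℤ :=
  Sum.elim (fun i => (i : ℤ) + 1) (fun i => -((i : ℤ) + 1))

/-- `w(i)` as an integer, for a signed permutation `w` and `1 ≤ i ≤ n`;
by convention `w(0) = 0` (and the value is `0` if `i` is out of range). -/
def bvalOf (n : ℕ) (w : Equiv.Perm (Fin n ⊕ Fin n)) (i : ℕ) : ℤ :=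
  if h : 1 ≤ i ∧ i ≤ n then bval n (w (Sum.inl ⟨i - 1, by omega⟩)) else 0

/-- In the group algebra `ℚ[B_n]` of the hyperoctahedral group, `xB n j` is the sum of
all signed permutations `w` with `0 = w(0) < w(1) < ... < w(j)`, i.e. the minimal-length
left coset representatives of the parabolic subgroup of type `B_j`. -/
noncomputable def xB (n j : ℕ) : MonoidAlgebra ℚ (Bgroup n) :=
  ∑ w ∈ Finset.univ.filter
      (fun w : Bgroup n =>
        ∀ i : ℕ, 1 ≤ i → i ≤ j → bvalOf n (w : Equiv.Perm (Fin n ⊕ Fin n)) (i - 1) <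
          bvalOf n (w : Equiv.Perm (Fin n ⊕ Fin n)) i),
    MonoidAlgebra.single w 1


/-!
An element `u` of `B_n` with `0 < u(1) < ⋯ < u(n-1)` is determined by `a = u(n)`, and every `a`
occurs, so `x_{n-1} = ∑_a u_a` over the `2n` signed values `a`. On signed values `u_a` acts by an
odd relabelling that is increasing on `[-(n-1), n-1]` and sends `n` to `a`. Hence, for fixed `w`,
`u_a⁻¹ w` is a term of `x_j` exactly when either `w` is a term of `x_j` and `±a` avoids
`w(1), …, w(j)` (`2(n-j)` choices of `a`), or `w` is a term of `x_{j-1}` and `a = w(j)` (one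
choice). Comparing coefficients of `w` gives the recursion.
-/

open Finset

theorem StrictMonoOn.comp_iff {α β γ : Type*} [Preorder α] [LinearOrder β] [Preorder γ]
    {ψ : β → γ} {g : α → β} {s : Set α} {t : Set β} (hψ : StrictMonoOn ψ t)
    (hg : Set.MapsTo g s t) : StrictMonoOn (ψ ∘ g) s ↔ StrictMonoOn g s :=
  ⟨fun h _ ha _ hb hab => (hψ.lt_iff_lt (hg ha) (hg hb)).1 (h ha hb hab), fun h => hψ.comp h hg⟩

theorem strictMonoOn_Iic_iff_forall_lt {β : Type*} [Preorder β] {f : ℕ → β} {j : ℕ} :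
    StrictMonoOn f (Set.Iic j) ↔ ∀ i, 1 ≤ i → i ≤ j → f (i - 1) < f i := by
  refine ⟨fun h i hi hij => h (by simp; omega) hij (by omega), fun h => ?_⟩
  refine strictMonoOn_Iic_of_lt_succ fun m hm => ?_
  simpa using h (m + 1) (by omega) (by simpa using hm)

theorem strictMonoOn_Iic_succ_iff {β : Type*} [Preorder β] {f : ℕ → β} {j : ℕ} :
    StrictMonoOn f (Set.Iic (j + 1)) ↔ StrictMonoOn f (Set.Iic j) ∧ f j < f (j + 1) := by
  rw [strictMonoOn_Iic_iff_forall_lt, strictMonoOn_Iic_iff_forall_lt]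
  refine ⟨fun h => ⟨fun i hi hij => h i hi (by omega), by simpa using h (j + 1) (by omega) le_rfl⟩,
    fun ⟨h, hj⟩ i hi hij => ?_⟩
  rcases Nat.le_succ_iff.1 hij with hij | rfl
  exacts [h i hi hij, by simpa using hj]

theorem Set.eqOn_Icc_of_strictMonoOn {β : Type*} [LinearOrder β] {f f' : ℕ → β} {k : ℕ}
    {s : Finset β} (hs : #s = k) (hf : StrictMonoOn f (Set.Icc 1 k))
    (hf' : StrictMonoOn f' (Set.Icc 1 k)) (hfs : ∀ i ∈ Set.Icc 1 k, f i ∈ s)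
    (hf's : ∀ i ∈ Set.Icc 1 k, f' i ∈ s) : Set.EqOn f f' (Set.Icc 1 k) := by
  have key : ∀ {g : ℕ → β}, StrictMonoOn g (Set.Icc 1 k) → (∀ i ∈ Set.Icc 1 k, g i ∈ s) →
      (fun i : Fin k => g (i + 1)) = s.orderEmbOfFin hs := fun hg hgs =>
    s.orderEmbOfFin_unique hs (fun i => hgs _ ⟨by omega, by omega⟩)
      fun i j hij => hg ⟨by omega, by omega⟩ ⟨by omega, by omega⟩ (by simpa using hij)
  intro i hi
  have := congrFun ((key hf hfs).trans (key hf' hf's).symm) ⟨i - 1, by grind⟩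
  simpa [Nat.sub_add_cancel hi.1] using this

-- The instance on the disjunction is a separate argument, so that the lemma matches filters
-- whose decidability instance was not built from those of `p` and `q`.
theorem Finset.card_filter_or_of_disjoint {α : Type*} [Fintype α] {p q : α → Prop}
    [DecidablePred p] [DecidablePred q] [DecidablePred fun a => p a ∨ q a]
    (h : ∀ a, p a → ¬q a) : #{a | p a ∨ q a} = #{a | p a} + #{a | q a} := by
  rw [← card_union_of_disjoint (disjoint_filter.2 fun a _ => h a)]
  congr 1
  ext
  simp

namespace MonoidAlgebra

variable {G R : Type*} [Semiring R]

theorem coeff_sum_single (t : Finset G) (g : G) :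
    (∑ x ∈ t, single x (1 : R)).coeff g = if g ∈ t then 1 else 0 := by
  simp [coeff_sum, Finsupp.single_apply]

theorem coeff_sum_single_mul_sum_single [Group G] [DecidableEq G] {ι : Type*} (s : Finset ι)
    (f : ι → G) (t : Finset G) (g : G) :
    ((∑ i ∈ s, single (f i) (1 : R)) * ∑ x ∈ t, single x 1).coeff g =
      (#{i ∈ s | (f i)⁻¹ * g ∈ t} : R) := by
  simp [Finset.sum_mul, coeff_sum, Finsupp.single_apply]

end MonoidAlgebra

namespace Bgroup

variable {n : ℕ}

theorem bval_swap (x : Fin n ⊕ Fin n) : bval n x.swap = -bval n x := by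
  cases x <;> simp [bval]

theorem bval_injective : Function.Injective (bval n) := by
  rintro (i | i) (j | j) h <;> simp only [bval, Sum.elim_inl, Sum.elim_inr] at h <;>
    first | omega | simp [Fin.ext_iff]; omega

theorem natAbs_bval_inl (i : Fin n) : (bval n (.inl i)).natAbs = i + 1 := by
  simp [bval]; omega

theorem natAbs_bval_inr (i : Fin n) : (bval n (.inr i)).natAbs = i + 1 := by
  simp [bval]; omega

theorem natAbs_bval_mem (x : Fin n ⊕ Fin n) : (bval n x).natAbs ∈ Set.Icc 1 n := by
  cases x <;> simp [natAbs_bval_inl, natAbs_bval_inr]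

theorem natAbs_bval_eq_iff {x y : Fin n ⊕ Fin n} :
    (bval n x).natAbs = (bval n y).natAbs ↔ x = y ∨ x = y.swap := by
  rcases x with i | i <;> rcases y with j | j <;> simp [bval, Fin.ext_iff] <;> omega

theorem apply_swap {w : Equiv.Perm (Fin n ⊕ Fin n)} (hw : w ∈ Bgroup n) (x : Fin n ⊕ Fin n) :
    w x.swap = (w x).swap :=
  hw x

theorem natAbs_bval_apply_eq_iff {w : Equiv.Perm (Fin n ⊕ Fin n)} (hw : w ∈ Bgroup n)
    {x y : Fin n ⊕ Fin n} :
    (bval n (w x)).natAbs = (bval n (w y)).natAbs ↔ (bval n x).natAbs = (bval n y).natAbs := by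
  rw [natAbs_bval_eq_iff, natAbs_bval_eq_iff, ← apply_swap hw, w.injective.eq_iff,
    w.injective.eq_iff]

theorem bvalOf_zero (w : Equiv.Perm (Fin n ⊕ Fin n)) : bvalOf n w 0 = 0 := by
  simp [bvalOf]

theorem bvalOf_succ (w : Equiv.Perm (Fin n ⊕ Fin n)) {i : ℕ} (hi : i < n) :
    bvalOf n w (i + 1) = bval n (w (.inl ⟨i, hi⟩)) := by
  simp [bvalOf, hi]

theorem bvalOf_of_mem_Icc (w : Equiv.Perm (Fin n ⊕ Fin n)) {i : ℕ} (hi : i ∈ Set.Icc 1 n) :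
    bvalOf n w i = bval n (w (.inl ⟨i - 1, by grind⟩)) :=
  dif_pos hi

theorem natAbs_bvalOf_mem (w : Equiv.Perm (Fin n ⊕ Fin n)) {i : ℕ} (hi : i ∈ Set.Icc 1 n) :
    (bvalOf n w i).natAbs ∈ Set.Icc 1 n := by
  rw [bvalOf_of_mem_Icc w hi]
  exact natAbs_bval_mem _

theorem injOn_natAbs_bvalOf {w : Equiv.Perm (Fin n ⊕ Fin n)} (hw : w ∈ Bgroup n) :
    Set.InjOn (fun i => (bvalOf n w i).natAbs) (Set.Icc 1 n) := by
  intro i hi i' hi' h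
  simp only [bvalOf_of_mem_Icc w hi, bvalOf_of_mem_Icc w hi', natAbs_bval_apply_eq_iff hw,
    natAbs_bval_inl] at h
  grind

theorem eq_of_bvalOf_eq {u v : Equiv.Perm (Fin n ⊕ Fin n)} (hu : u ∈ Bgroup n)
    (hv : v ∈ Bgroup n) (h : bvalOf n u = bvalOf n v) : u = v := by
  have hinl : ∀ i : Fin n, u (.inl i) = v (.inl i) := fun i => bval_injective <| by
    rw [← bvalOf_succ, ← bvalOf_succ, h]
  ext1 (i | i)
  · exact hinl i
  · rw [← Sum.swap_inl, apply_swap hu, apply_swap hv, hinl]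

/-- For `f = bvalOf n u` this is the action of `u` on signed values (`bval_apply`). -/
def oddExt (f : ℕ → ℤ) (t : ℤ) : ℤ := t.sign * f t.natAbs

theorem oddExt_neg (f : ℕ → ℤ) (t : ℤ) : oddExt f (-t) = -oddExt f t := by
  simp [oddExt]

theorem oddExt_natCast {f : ℕ → ℤ} (h0 : f 0 = 0) (i : ℕ) : oddExt f i = f i := by
  rcases Nat.eq_zero_or_pos i with rfl | hi
  · simp [oddExt, h0]
  · simp [oddExt, Int.sign_eq_one_of_pos (by omega : (0 : ℤ) < i)]

theorem natAbs_oddExt {f : ℕ → ℤ} (h0 : f 0 = 0) (t : ℤ) :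
    (oddExt f t).natAbs = (f t.natAbs).natAbs := by
  obtain ⟨m, rfl | rfl⟩ := t.eq_nat_or_neg
  · simp [oddExt_natCast h0]
  · simp [oddExt_neg, oddExt_natCast h0]

theorem strictMonoOn_oddExt {f : ℕ → ℤ} {k : ℕ} (h0 : f 0 = 0)
    (hf : StrictMonoOn f (Set.Iic k)) : StrictMonoOn (oddExt f) (Set.Icc (-k : ℤ) k) := by
  have hpos : ∀ i ≤ k, 0 < i → 0 < f i := fun i hi hi0 => h0 ▸ hf (by simp) (by simpa) hi0
  have hnonneg : ∀ i ≤ k, 0 ≤ f i := fun i hi => by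
    rcases Nat.eq_zero_or_pos i with rfl | hi0
    exacts [h0.ge, (hpos i hi hi0).le]
  rintro s ⟨hs1, hs2⟩ t ⟨ht1, ht2⟩ hst
  obtain ⟨p, rfl | rfl⟩ := s.eq_nat_or_neg <;> obtain ⟨q, rfl | rfl⟩ := t.eq_nat_or_neg <;>
    simp only [oddExt_neg, oddExt_natCast h0]
  · exact hf (by simp; omega) (by simp; omega) (by omega)
  · omega
  · have := hnonneg p (by omega)
    have := hnonneg q (by omega)
    rcases Nat.eq_zero_or_pos p with hp | hp
    · have := hpos q (by omega) (by omega); omega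
    · have := hpos p (by omega) hp; omega
  · exact neg_lt_neg (hf (by simp; omega) (by simp; omega) (by omega))

theorem bval_apply {w : Equiv.Perm (Fin n ⊕ Fin n)} (hw : w ∈ Bgroup n) (x : Fin n ⊕ Fin n) :
    bval n (w x) = oddExt (bvalOf n w) (bval n x) := by
  have h0 := bvalOf_zero w
  rcases x with i | i
  · have : bval n (.inl i) = ((i + 1 : ℕ) : ℤ) := by simp [bval]
    rw [this, oddExt_natCast h0, bvalOf_succ]
  · have : bval n (.inr i) = -((i + 1 : ℕ) : ℤ) := by simp [bval]
    rw [this, oddExt_neg, oddExt_natCast h0, bvalOf_succ _ i.isLt, ← Sum.swap_inl,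
      apply_swap hw, bval_swap]

theorem bvalOf_mul {u : Equiv.Perm (Fin n ⊕ Fin n)} (hu : u ∈ Bgroup n)
    (v : Equiv.Perm (Fin n ⊕ Fin n)) : bvalOf n (u * v) = oddExt (bvalOf n u) ∘ bvalOf n v := by
  ext i
  by_cases hi : 1 ≤ i ∧ i ≤ n
  · simp only [bvalOf, dif_pos hi, Function.comp_apply, Equiv.Perm.mul_apply, bval_apply hu]
  · simp [bvalOf, dif_neg hi, oddExt]

/-- The properties of the action on values of an element `u` with `0 < u(1) < ⋯ < u(k)` and
`u(k+1) = α`. -/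
structure IsOddInsertion (ψ : ℤ → ℤ) (k : ℕ) (α : ℤ) : Prop where
  map_neg : ∀ t, ψ (-t) = -ψ t
  map_top : ψ (k + 1) = α
  strictMonoOn : StrictMonoOn ψ (Set.Icc (-k : ℤ) k)
  natAbs_ne : ∀ t ∈ Set.Icc (-k : ℤ) k, (ψ t).natAbs ≠ α.natAbs

namespace IsOddInsertion

variable {ψ : ℤ → ℤ} {k : ℕ} {α : ℤ}

theorem ne_of_mem (hψ : IsOddInsertion ψ k α) {t : ℤ} (ht : t ∈ Set.Icc (-k : ℤ) k) :
    ψ t ≠ α :=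
  fun h => hψ.natAbs_ne t ht (by rw [h])

theorem ne_zero (hψ : IsOddInsertion ψ k α) : α ≠ 0 := by
  have h0 : ψ 0 = 0 := by have := hψ.map_neg 0; rw [neg_zero] at this; omega
  exact fun h => hψ.natAbs_ne 0 (by simp) (by rw [h0, h])

variable {g : ℕ → ℤ} {i j : ℕ}

theorem strictMonoOn_Iic_iff_of_apply_eq_top (hψ : IsOddInsertion ψ k α)
    (hi : i ∈ Set.Icc 1 j) (hgi : g i = k + 1)
    (hother : ∀ i' ≤ j, i' ≠ i → g i' ∈ Set.Icc (-k : ℤ) k) :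
    StrictMonoOn g (Set.Iic j) ↔
      (StrictMonoOn (ψ ∘ g) (Set.Iic j) ∧ ∀ i ∈ Set.Icc 1 j, (ψ (g i)).natAbs ≠ α.natAbs) ∨
      (StrictMonoOn (ψ ∘ g) (Set.Iic (j - 1)) ∧ ψ (g j) = α) := by
  rcases hi.2.lt_or_eq with hij | rfl
  · have hgj := hother j le_rfl hij.ne'
    refine iff_of_false (fun h => ?_) ?_
    · have := h hi.2 (le_refl j) hij
      simp only [Set.mem_Icc] at hgj
      omega
    · rintro (⟨-, h⟩ | ⟨-, h⟩)
      · exact h i hi (by rw [hgi, hψ.map_top])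
      · exact hψ.ne_of_mem hgj h
  · obtain ⟨j, rfl⟩ : ∃ j', i = j' + 1 := ⟨i - 1, by grind⟩
    have hmaps : Set.MapsTo g (Set.Iic j) (Set.Icc (-k : ℤ) k) :=
      fun i' hi' => hother i' (by simp at hi'; omega) (by simp at hi'; omega)
    have hlt : g j < k + 1 := by have := (hmaps (le_refl j)).2; omega
    rw [strictMonoOn_Iic_succ_iff, Nat.add_sub_cancel, hψ.strictMonoOn.comp_iff hmaps, hgi,
      hψ.map_top]
    simp only [hlt, and_true]
    refine ⟨Or.inr, ?_⟩
    rintro (⟨-, h⟩ | h)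
    · exact absurd (by rw [hgi, hψ.map_top]) (h (j + 1) hi)
    · exact h

theorem strictMonoOn_Iic_iff_of_apply_eq_neg_top (hψ : IsOddInsertion ψ k α) (hg0 : g 0 = 0)
    (hi : i ∈ Set.Icc 1 j) (hgi : g i = -(k + 1))
    (hother : ∀ i' ≤ j, i' ≠ i → g i' ∈ Set.Icc (-k : ℤ) k) :
    StrictMonoOn g (Set.Iic j) ↔
      (StrictMonoOn (ψ ∘ g) (Set.Iic j) ∧ ∀ i ∈ Set.Icc 1 j, (ψ (g i)).natAbs ≠ α.natAbs) ∨
      (StrictMonoOn (ψ ∘ g) (Set.Iic (j - 1)) ∧ ψ (g j) = α) := by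
  refine iff_of_false (fun h => ?_) ?_
  · have := h (by simp) hi.2 hi.1
    rw [hg0, hgi] at this
    omega
  · rintro (⟨-, h⟩ | ⟨-, h⟩)
    · exact h i hi (by rw [hgi, hψ.map_neg, hψ.map_top, Int.natAbs_neg])
    · rcases eq_or_ne j i with rfl | hji
      · rw [hgi, hψ.map_neg, hψ.map_top] at h
        exact hψ.ne_zero (by omega)
      · exact hψ.ne_of_mem (hother j le_rfl hji) h

/-- For `u` with value action `ψ` and `g` the one-line notation of `v`, this describes when
`0 < v(1) < ⋯ < v(j)` in terms of `u v` (whose one-line notation is `ψ ∘ g`) and `α = u(k+1)`. -/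
theorem strictMonoOn_Iic_iff (hψ : IsOddInsertion ψ k α) (hjk : j ≤ k + 1) (hg0 : g 0 = 0)
    (hg_le : ∀ i ∈ Set.Icc 1 j, (g i).natAbs ≤ k + 1)
    (hg_inj : Set.InjOn (fun i => (g i).natAbs) (Set.Icc 1 j)) :
    StrictMonoOn g (Set.Iic j) ↔
      (StrictMonoOn (ψ ∘ g) (Set.Iic j) ∧ ∀ i ∈ Set.Icc 1 j, (ψ (g i)).natAbs ≠ α.natAbs) ∨
      (StrictMonoOn (ψ ∘ g) (Set.Iic (j - 1)) ∧ ψ (g j) = α) := by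
  have hsmall : ∀ i ≤ j, (g i).natAbs ≠ k + 1 → g i ∈ Set.Icc (-k : ℤ) k := by
    intro i hi hne
    rcases Nat.eq_zero_or_pos i with rfl | hi0
    · simp [hg0]
    · have := hg_le i ⟨hi0, hi⟩
      constructor <;> omega
  by_cases hbig : ∃ i ∈ Set.Icc 1 j, (g i).natAbs = k + 1
  · obtain ⟨i, hi, hgi⟩ := hbig
    have hother : ∀ i' ≤ j, i' ≠ i → g i' ∈ Set.Icc (-k : ℤ) k := by
      refine fun i' hi' hne => hsmall i' hi' fun h => ?_
      rcases Nat.eq_zero_or_pos i' with rfl | hi'0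
      · simp [hg0] at h
      · exact hne (hg_inj ⟨hi'0, hi'⟩ hi (h.trans hgi.symm))
    rcases Int.natAbs_eq (g i) with h | h <;> push_cast [hgi] at h
    · exact hψ.strictMonoOn_Iic_iff_of_apply_eq_top hi h hother
    · exact hψ.strictMonoOn_Iic_iff_of_apply_eq_neg_top hg0 hi h hother
  · push Not at hbig
    have hmaps : Set.MapsTo g (Set.Iic j) (Set.Icc (-k : ℤ) k) := by
      refine fun i (hi : i ≤ j) => hsmall i hi ?_
      rcases Nat.eq_zero_or_pos i with rfl | hi0
      exacts [by simp [hg0], hbig i ⟨hi0, hi⟩]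
    rw [hψ.strictMonoOn.comp_iff hmaps]
    simp only [hψ.ne_of_mem (hmaps (le_refl j)), and_false, or_false]
    exact (and_iff_left fun i hi => hψ.natAbs_ne _ (hmaps hi.2)).symm

end IsOddInsertion

noncomputable def ascending (n j : ℕ) : Finset (Bgroup n) :=
  {w | StrictMonoOn (bvalOf n w) (Set.Iic j)}

theorem mem_ascending {j : ℕ} {w : Bgroup n} :
    w ∈ ascending n j ↔ StrictMonoOn (bvalOf n w) (Set.Iic j) := by
  simp [ascending]

theorem xB_eq_sum_ascending (j : ℕ) :
    xB n j = ∑ w ∈ ascending n j, MonoidAlgebra.single w 1 := by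
  simp only [xB, ascending, strictMonoOn_Iic_iff_forall_lt]

variable {k : ℕ}

theorem isOddInsertion_oddExt {u : Bgroup (k + 1)} (hu : u ∈ ascending (k + 1) k) :
    IsOddInsertion (oddExt (bvalOf (k + 1) u)) k (bvalOf (k + 1) u (k + 1)) where
  map_neg := oddExt_neg _
  map_top := by exact_mod_cast oddExt_natCast (bvalOf_zero _) (k + 1)
  strictMonoOn := strictMonoOn_oddExt (bvalOf_zero _) (mem_ascending.1 hu)
  natAbs_ne t ht := by
    rw [natAbs_oddExt (bvalOf_zero _)]
    have htk : t.natAbs ≤ k := by simp only [Set.mem_Icc] at ht; omega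
    rcases Nat.eq_zero_or_pos t.natAbs with h0 | hpos
    · have := (natAbs_bvalOf_mem (n := k + 1) u (i := k + 1) ⟨by omega, le_rfl⟩).1
      rw [h0, bvalOf_zero, Int.natAbs_zero]
      omega
    · intro h
      have := injOn_natAbs_bvalOf u.2 ⟨hpos, by omega⟩ ⟨by omega, le_rfl⟩ h
      omega

theorem inv_mul_mem_ascending_iff {j : ℕ} {u : Bgroup (k + 1)} (hu : u ∈ ascending (k + 1) k)
    (w : Bgroup (k + 1)) (hjk : j ≤ k + 1) :
    u⁻¹ * w ∈ ascending (k + 1) j ↔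
      (w ∈ ascending (k + 1) j ∧ ∀ i ∈ Set.Icc 1 j,
        (bvalOf (k + 1) w i).natAbs ≠ (bvalOf (k + 1) u (k + 1)).natAbs) ∨
      (w ∈ ascending (k + 1) (j - 1) ∧ bvalOf (k + 1) w j = bvalOf (k + 1) u (k + 1)) := by
  have hcomp : oddExt (bvalOf (k + 1) u) ∘ bvalOf (k + 1) ↑(u⁻¹ * w) = bvalOf (k + 1) w := by
    rw [← bvalOf_mul u.2]
    simp
  have hv := (u⁻¹ * w).2
  simp only [mem_ascending]
  rw [← hcomp]
  exact (isOddInsertion_oddExt hu).strictMonoOn_Iic_iff hjk (bvalOf_zero _)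
    (fun i hi => (natAbs_bvalOf_mem _ ⟨hi.1, hi.2.trans hjk⟩).2)
    ((injOn_natAbs_bvalOf hv).mono (Set.Icc_subset_Icc_right hjk))

theorem eq_of_mem_ascending {u u' : Bgroup (k + 1)} (hu : u ∈ ascending (k + 1) k)
    (hu' : u' ∈ ascending (k + 1) k)
    (h : bvalOf (k + 1) u (k + 1) = bvalOf (k + 1) u' (k + 1)) : u = u' := by
  -- `u(1) < ⋯ < u(k)` enumerates the `k` positive values other than `|u(k+1)|`.
  set s := (Finset.Icc 1 (k + 1 : ℤ)).erase ((bvalOf (k + 1) u (k + 1)).natAbs : ℤ)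
  have hcard : #s = k := by
    have := natAbs_bvalOf_mem (n := k + 1) u (i := k + 1) ⟨by omega, le_rfl⟩
    rw [Finset.card_erase_of_mem (by simp only [Finset.mem_Icc, Set.mem_Icc] at this ⊢; omega)]
    simp
  have hmem : ∀ {v : Bgroup (k + 1)}, v ∈ ascending (k + 1) k →
      bvalOf (k + 1) v (k + 1) = bvalOf (k + 1) u (k + 1) →
      ∀ i ∈ Set.Icc 1 k, bvalOf (k + 1) v i ∈ s := by
    intro v hv hvu i hi
    have hpos := mem_ascending.1 hv (show 0 ∈ Set.Iic k by simp) hi.2 hi.1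
    have hle := natAbs_bvalOf_mem (n := k + 1) v (i := i) ⟨hi.1, by grind⟩
    have hne : (bvalOf (k + 1) v i).natAbs ≠ (bvalOf (k + 1) v (k + 1)).natAbs :=
      fun h => by have := injOn_natAbs_bvalOf v.2 ⟨hi.1, by grind⟩ ⟨by omega, le_rfl⟩ h; grind
    rw [bvalOf_zero] at hpos
    simp only [s, ← hvu, Finset.mem_erase, Finset.mem_Icc, Set.mem_Icc] at hle ⊢
    omega
  have hmid := Set.eqOn_Icc_of_strictMonoOn hcard
    ((mem_ascending.1 hu).mono Set.Icc_subset_Iic_self)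
    ((mem_ascending.1 hu').mono Set.Icc_subset_Iic_self) (hmem hu rfl) (hmem hu' h.symm)
  refine Subtype.ext (eq_of_bvalOf_eq u.2 u'.2 (funext fun i => ?_))
  obtain rfl | hi | rfl | hi : i = 0 ∨ i ∈ Set.Icc 1 k ∨ i = k + 1 ∨ k + 1 < i := by
    simp only [Set.mem_Icc]; omega
  · simp [bvalOf_zero]
  · exact hmid hi
  · exact h
  · simp [bvalOf, hi.not_ge]

theorem sumCongr_mem (σ : Equiv.Perm (Fin n)) : σ.sumCongr σ ∈ Bgroup n := by
  rintro (i | i) <;> rfl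

theorem swap_inl_inr_mem (i : Fin n) : Equiv.swap (.inl i) (.inr i) ∈ Bgroup n := by
  rintro (j | j) <;> rcases eq_or_ne j i with rfl | hji <;>
    simp [Equiv.swap_apply_of_ne_of_ne, *]

def moveLastTo (m : Fin (k + 1)) : Equiv.Perm (Fin (k + 1)) :=
  finSuccEquivLast.trans (finSuccEquiv' m).symm

def ascendingOfLast : Fin (k + 1) ⊕ Fin (k + 1) → Bgroup (k + 1)
  | .inl m => ⟨_, sumCongr_mem (moveLastTo m)⟩
  | .inr m => ⟨_, sumCongr_mem (moveLastTo m)⟩ * ⟨_, swap_inl_inr_mem (Fin.last k)⟩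

theorem ascendingOfLast_apply_last (a : Fin (k + 1) ⊕ Fin (k + 1)) :
    (ascendingOfLast a : Equiv.Perm (Fin (k + 1) ⊕ Fin (k + 1))) (.inl (Fin.last k)) = a := by
  cases a <;> simp [ascendingOfLast, moveLastTo]

theorem ascendingOfLast_apply_castSucc (a : Fin (k + 1) ⊕ Fin (k + 1)) (i : Fin k) :
    (ascendingOfLast a : Equiv.Perm (Fin (k + 1) ⊕ Fin (k + 1))) (.inl i.castSucc) =
      .inl ((Sum.elim id id a).succAbove i) := by
  cases a <;> simp [ascendingOfLast, moveLastTo, Equiv.swap_apply_of_ne_of_ne, Fin.castSucc_ne_last]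

theorem bvalOf_ascendingOfLast (a : Fin (k + 1) ⊕ Fin (k + 1)) :
    bvalOf (k + 1) (ascendingOfLast a) (k + 1) = bval (k + 1) a := by
  rw [bvalOf_succ _ k.lt_succ_self]
  exact congrArg (bval _) (ascendingOfLast_apply_last a)

theorem ascendingOfLast_mem (a : Fin (k + 1) ⊕ Fin (k + 1)) :
    ascendingOfLast a ∈ ascending (k + 1) k := by
  have hval : ∀ (i : ℕ) (hi : i < k), bvalOf (k + 1) (ascendingOfLast a) (i + 1) =
      ((Sum.elim id id a).succAbove ⟨i, hi⟩ : ℕ) + 1 := by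
    intro i hi
    rw [bvalOf_succ _ (by omega), ← Fin.castSucc_mk _ _ hi, ascendingOfLast_apply_castSucc]
    simp [bval]
  refine mem_ascending.2 (strictMonoOn_Iic_of_lt_succ fun m hm => ?_)
  rw [Order.succ_eq_add_one, hval m hm]
  rcases m with _ | m
  · simp [bvalOf_zero]
  · rw [hval m (by omega), add_lt_add_iff_right, Nat.cast_lt]
    exact Fin.strictMono_succAbove _ (Fin.mk_lt_mk.2 m.lt_succ_self)

theorem ascending_eq_image_ascendingOfLast :
    ascending (k + 1) k = univ.image ascendingOfLast := by
  ext u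
  simp only [mem_image, mem_univ, true_and]
  refine ⟨fun hu => ⟨(u : Equiv.Perm _) (.inl (Fin.last k)),
    eq_of_mem_ascending (ascendingOfLast_mem _) hu ?_⟩,
    by rintro ⟨a, rfl⟩; exact ascendingOfLast_mem a⟩
  rw [bvalOf_ascendingOfLast, bvalOf_succ _ k.lt_succ_self]
  rfl

theorem xB_eq_sum_ascendingOfLast :
    xB (k + 1) k = ∑ a, MonoidAlgebra.single (ascendingOfLast a) 1 := by
  have hinj : Function.Injective (ascendingOfLast (k := k)) := fun a b h => by
    rw [← ascendingOfLast_apply_last a, ← ascendingOfLast_apply_last b, h]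
  rw [xB_eq_sum_ascending, ascending_eq_image_ascendingOfLast, sum_image hinj.injOn]

theorem card_lt_natAbs_bval {j : ℕ} (hj : j ≤ n) :
    #{b : Fin n ⊕ Fin n | j < (bval n b).natAbs} = 2 * (n - j) := by
  have h1 := Fin.card_filter_val_lt (n := n) (m := j)
  have h2 := card_filter_add_card_filter_not (s := univ) (p := fun i : Fin n => (i : ℕ) < j)
  simp only [not_lt, card_univ, Fintype.card_fin] at h2
  rw [card_filter, Fintype.sum_sum_type]
  simp only [natAbs_bval_inl, natAbs_bval_inr, Nat.lt_succ_iff, ← card_filter]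
  omega

theorem card_natAbs_bvalOf_ne {w : Equiv.Perm (Fin n ⊕ Fin n)} (hw : w ∈ Bgroup n) {j : ℕ}
    (hj : j ≤ n) :
    #{a | ∀ i ∈ Set.Icc 1 j, (bvalOf n w i).natAbs ≠ (bval n a).natAbs} = 2 * (n - j) := by
  have key : ∀ b, (∀ i ∈ Set.Icc 1 j, (bvalOf n w i).natAbs ≠ (bval n (w b)).natAbs) ↔
      j < (bval n b).natAbs := fun b => by
    have hb := (natAbs_bval_mem b).1
    have hiff : ∀ i ∈ Set.Icc 1 j, (bvalOf n w i).natAbs = (bval n (w b)).natAbs ↔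
        i = (bval n b).natAbs := fun i hi => by
      rw [bvalOf_of_mem_Icc w ⟨hi.1, hi.2.trans hj⟩, natAbs_bval_apply_eq_iff hw,
        natAbs_bval_inl, Fin.val_mk]
      have := hi.1
      omega
    refine ⟨fun h => ?_, fun h i hi => mt (hiff i hi).1 (by have := hi.2; omega)⟩
    by_contra hle
    exact h _ ⟨hb, by omega⟩ ((hiff _ ⟨hb, by omega⟩).2 rfl)
  rw [← card_lt_natAbs_bval hj]
  refine card_equiv w.symm fun a => ?_
  simp only [mem_filter, mem_univ, true_and, ← key, Equiv.apply_symm_apply]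

theorem card_bvalOf_eq (w : Equiv.Perm (Fin n ⊕ Fin n)) {j : ℕ} (hj : j ∈ Set.Icc 1 n) :
    #{a | bvalOf n w j = bval n a} = 1 := by
  simp [bvalOf_of_mem_Icc w hj, bval_injective.eq_iff, filter_eq]

theorem card_inv_mul_mem_ascending {j : ℕ} (w : Bgroup (k + 1)) (hj : 1 ≤ j) (hjk : j ≤ k + 1) :
    #{a | (ascendingOfLast a)⁻¹ * w ∈ ascending (k + 1) j} =
      (if w ∈ ascending (k + 1) j then 2 * (k + 1 - j) else 0) +
        if w ∈ ascending (k + 1) (j - 1) then 1 else 0 := by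
  rw [filter_congr fun a _ => by
    rw [inv_mul_mem_ascending_iff (ascendingOfLast_mem a) w hjk, bvalOf_ascendingOfLast],
    card_filter_or_of_disjoint fun a h1 h2 => h1.2 j ⟨hj, le_rfl⟩ (by rw [h2.2])]
  congr 1 <;> split_ifs <;> simp only [*, true_and, false_and, filter_false, card_empty]
  exacts [card_natAbs_bvalOf_ne w.2 hjk, card_bvalOf_eq (n := k + 1) w ⟨hj, hjk⟩]

open MonoidAlgebra in
theorem xB_succ_mul {j : ℕ} (hj : 1 ≤ j) (hjk : j ≤ k + 1) :
    xB (k + 1) k * xB (k + 1) j =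
      ((2 * (k + 1 - j) : ℕ) : ℚ) • xB (k + 1) j + xB (k + 1) (j - 1) := by
  ext w
  rw [xB_eq_sum_ascendingOfLast, xB_eq_sum_ascending, xB_eq_sum_ascending, coeff_add,
    coeff_smul, Finsupp.add_apply, Finsupp.smul_apply, coeff_sum_single_mul_sum_single,
    coeff_sum_single, coeff_sum_single, card_inv_mul_mem_ascending w hj hjk]
  split_ifs <;> simp

open MonoidAlgebra in
theorem xB_succ_mul_xB_zero (k : ℕ) :
    xB (k + 1) k * xB (k + 1) 0 = ((2 * (k + 1) : ℕ) : ℚ) • xB (k + 1) 0 := by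
  have hall : ∀ w, w ∈ ascending (k + 1) 0 := fun w =>
    mem_ascending.2 fun a ha b hb hab => by simp only [Set.mem_Iic] at ha hb; omega
  ext w
  rw [xB_eq_sum_ascendingOfLast, xB_eq_sum_ascending, coeff_smul, Finsupp.smul_apply,
    coeff_sum_single_mul_sum_single, coeff_sum_single]
  simp [hall]
  ring

end Bgroup

/-- In `ℚ[B_n]`: for `0 ≤ k < n`, `x_{n-1} * x_{n-k} = 2k • x_{n-k} + x_{n-k-1}`, and
`x_{n-1} * x_0 = 2n • x_0`. -/
theorem xB_mul (n : ℕ) (hn : 1 ≤ n) :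
    (∀ k, k < n →
        xB n (n - 1) * xB n (n - k) =
          ((2 * k : ℕ) : ℚ) • xB n (n - k) + xB n (n - k - 1)) ∧
    xB n (n - 1) * xB n 0 = ((2 * n : ℕ) : ℚ) • xB n 0 := by
  obtain ⟨m, rfl⟩ : ∃ m, n = m + 1 := ⟨n - 1, by omega⟩
  rw [Nat.add_sub_cancel]
  refine ⟨fun k hk => ?_, Bgroup.xB_succ_mul_xB_zero m⟩
  have h := Bgroup.xB_succ_mul (k := m) (j := m + 1 - k) (by omega) (by omega)
  rwa [show m + 1 - (m + 1 - k) = k by omega] at h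
end
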